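/- For every input x ∈ {0,1}^{2^d} to the depth-d NAND-tree: if d is even, then R_{s,t}(G_{NAND_d}(x)) ≤ F_A(x) and R_{s',t'}(G'_{NAND_d}(x)) ≤ F_B(x); if d is odd, then R_{s,t}(G_{NAND_d}(x)) ≤ 2F_A(x) and R_{s',t'}(G'_{NAND_d}(x)) ≤ 2F_B(x). (Here effective resistances use unit edge weights, and both sides may be ∞.) -/

import Mathlib

open scoped ENNReal

namespace STConn

variable {V E : Type*}

/-- `v` is an endpoint of edge `e`. -/
def Touches (ends : E → V × V) (e : E) (v : V) : Prop :=
  (ends e).1 = v ∨ (ends e).2 = v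

/-- Net flow out of vertex `v` for an edge-valued function `θ` (value along the
fixed orientation of each edge). -/
noncomputable def netflow [Fintype E] [DecidableEq V] (ends : E → V × V) (θ : E → ℝ) (v : V) : ℝ :=
  ∑ e, θ e * ((if (ends e).1 = v then (1:ℝ) else 0) - (if (ends e).2 = v then 1 else 0))

/-- `θ` is a unit `st`-flow: net flow `+1` at `s`, `-1` at `t`, `0` elsewhere. -/
def IsUnitFlow [Fintype E] [DecidableEq V] (ends : E → V × V) (s t : V) (θ : E → ℝ) : Prop :=
  ∀ v, netflow ends θ v = (if v = s then (1:ℝ) else 0) - (if v = t then 1 else 0)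

/-- Energy of a flow with respect to edge weights `c`. -/
noncomputable def energy [Fintype E] (c : E → ℝ) (θ : E → ℝ) : ℝ :=
  ∑ e, θ e ^ 2 / c e

/-- Effective resistance between `s` and `t`, restricted to flows supported on `S`
(taking value `∞` if no unit `st`-flow supported on `S` exists). -/
noncomputable def effResOn [Fintype E] [DecidableEq V] (ends : E → V × V) (c : E → ℝ)
    (S : Set E) (s t : V) : ℝ≥0∞ :=
  ⨅ θ : {θ : E → ℝ // IsUnitFlow ends s t θ ∧ ∀ e ∉ S, θ e = 0},
    ENNReal.ofReal (energy c θ.1)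

/-- Effective resistance between `s` and `t` in the network `(ends, c)`. -/
noncomputable def effRes [Fintype E] [DecidableEq V] (ends : E → V × V) (c : E → ℝ)
    (s t : V) : ℝ≥0∞ :=
  effResOn ends c Set.univ s t

end STConn

namespace STConn

/-- Read-once AND-OR formulas on `N` variables (gates have fan-in `k+1`). -/
inductive Formula (N : ℕ) : Type where
  | var : Fin N → Formula N
  | and : (k : ℕ) → (Fin (k + 1) → Formula N) → Formula N
  | or : (k : ℕ) → (Fin (k + 1) → Formula N) → Formula N

namespace Formula

variable {N : ℕ}

/-- Evaluation of a formula on an input. -/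
def eval : Formula N → (Fin N → Bool) → Bool
  | .var i, x => x i
  | .and _ fs, x => (List.finRange _).all fun i => (fs i).eval x
  | .or _ fs, x => (List.finRange _).any fun i => (fs i).eval x

/-- The leaves of a formula; these index the edges of the graph `G_φ`. -/
def Leaves : Formula N → Type
  | .var _ => Unit
  | .and k fs => Σ i : Fin (k + 1), (fs i).Leaves
  | .or k fs => Σ i : Fin (k + 1), (fs i).Leaves

/-- The variable labelling a leaf. -/
def label : (φ : Formula N) → φ.Leaves → Fin N
  | .var i, _ => i
  | .and _ fs, ⟨i, l⟩ => (fs i).label l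
  | .or _ fs, ⟨i, l⟩ => (fs i).label l

/-- The internal (non-terminal) vertices of the series-parallel graph `G_φ`:
series composition (for `∧`) introduces `k` junction vertices. -/
def Inner : Formula N → Type
  | .var _ => Empty
  | .and k fs => (Σ i : Fin (k + 1), (fs i).Inner) ⊕ Fin k
  | .or k fs => Σ i : Fin (k + 1), (fs i).Inner

/-- The vertex set of `G_φ`: internal vertices plus the two terminals
(`Sum.inr true = s`, `Sum.inr false = t`). -/
abbrev Vert (φ : Formula N) : Type := φ.Inner ⊕ Bool

/-- Embedding the vertices of the `i`-th subgraph into a series composition. -/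
def vmapAnd (k : ℕ) (fs : Fin (k + 1) → Formula N) (i : Fin (k + 1)) :
    (fs i).Vert → (Formula.and k fs).Vert
  | .inl w => .inl (.inl ⟨i, w⟩)
  | .inr true =>
      if h : i.val = 0 then .inr true
      else .inl (.inr ⟨i.val - 1, by have := i.isLt; omega⟩)
  | .inr false =>
      if h : i.val = k then .inr false
      else .inl (.inr ⟨i.val, by have := i.isLt; omega⟩)

/-- Embedding the vertices of the `i`-th subgraph into a parallel composition. -/
def vmapOr (k : ℕ) (fs : Fin (k + 1) → Formula N) (i : Fin (k + 1)) :
    (fs i).Vert → (Formula.or k fs).Vert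
  | .inl w => .inl ⟨i, w⟩
  | .inr b => .inr b

/-- The endpoints of each edge (= leaf) of the series-parallel graph `G_φ`:
a variable is a single `st`-edge, `∧` composes the subgraphs in series, and
`∨` composes them in parallel. -/
def ends : (φ : Formula N) → φ.Leaves → φ.Vert × φ.Vert
  | .var _, _ => (.inr true, .inr false)
  | .and k fs, ⟨i, l⟩ =>
      (vmapAnd k fs i ((fs i).ends l).1, vmapAnd k fs i ((fs i).ends l).2)
  | .or k fs, ⟨i, l⟩ =>
      (vmapOr k fs i ((fs i).ends l).1, vmapOr k fs i ((fs i).ends l).2)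

/-- The dual formula: swap every `∧` with `∨`. -/
def dualF : Formula N → Formula N
  | .var i => .var i
  | .and k fs => .or k fun i => dualF (fs i)
  | .or k fs => .and k fun i => dualF (fs i)

def leavesFintype : (φ : Formula N) → Fintype φ.Leaves
  | .var _ => inferInstanceAs (Fintype Unit)
  | .and k fs =>
      letI := fun i => leavesFintype (fs i)
      inferInstanceAs (Fintype (Σ i : Fin (k + 1), (fs i).Leaves))
  | .or k fs =>
      letI := fun i => leavesFintype (fs i)
      inferInstanceAs (Fintype (Σ i : Fin (k + 1), (fs i).Leaves))

instance (φ : Formula N) : Fintype φ.Leaves := leavesFintype φ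

def innerDecEq : (φ : Formula N) → DecidableEq φ.Inner
  | .var _ => fun a => a.elim
  | .and k fs =>
      letI := fun i => innerDecEq (fs i)
      inferInstanceAs (DecidableEq ((Σ i : Fin (k + 1), (fs i).Inner) ⊕ Fin k))
  | .or k fs =>
      letI := fun i => innerDecEq (fs i)
      inferInstanceAs (DecidableEq (Σ i : Fin (k + 1), (fs i).Inner))

instance (φ : Formula N) : DecidableEq φ.Inner := innerDecEq φ

instance (φ : Formula N) : DecidableEq φ.Vert :=
  inferInstanceAs (DecidableEq (φ.Inner ⊕ Bool))

/-- The source terminal `s` of `G_φ`. -/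
def src (φ : Formula N) : φ.Vert := .inr true

/-- The sink terminal `t` of `G_φ`. -/
def snk (φ : Formula N) : φ.Vert := .inr false

end Formula
end STConn
namespace STConn
namespace Formula

/-- Relabel the variables of a formula along `f`. -/
def relabel {N M : ℕ} (f : Fin N → Fin M) : Formula N → Formula M
  | .var i => .var (f i)
  | .and k fs => .and k fun i => (fs i).relabel f
  | .or k fs => .or k fun i => (fs i).relabel f

end Formula

/-- The embedding of the `i`-th half of `Fin (2^(d+1))`. -/
def embed (d : ℕ) (i : Fin 2) : Fin (2 ^ d) → Fin (2 ^ (d + 1)) := fun j =>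
  ⟨i.val * 2 ^ d + j.val, by
    have hj := j.isLt
    have hi : i.val * 2 ^ d ≤ 1 * 2 ^ d :=
      Nat.mul_le_mul_right _ (Nat.lt_succ_iff.mp i.isLt)
    have h2 : 2 ^ (d + 1) = 2 ^ d + 2 ^ d := by ring
    omega⟩

/-- The depth-`d` NAND-tree formula: a full binary AND-OR tree on `2^d`
variables with `∨`-gates at even distance from the leaves and `∧`-gates at odd
distance (so the root is `∧` iff `d` is odd); `NAND₀` is a single variable. -/
def nandTree : (d : ℕ) → Formula (2 ^ d)
  | 0 => .var ⟨0, Nat.one_pos⟩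
  | d + 1 =>
      if (d + 1) % 2 = 1 then
        .and 1 fun i => (nandTree d).relabel (embed d i)
      else
        .or 1 fun i => (nandTree d).relabel (embed d i)

/-- The input to the `i`-th principal subtree of a depth-`(d+1)` NAND-tree. -/
def half (d : ℕ) (i : Fin 2) (x : Fin (2 ^ (d + 1)) → Bool) : Fin (2 ^ d) → Bool :=
  fun j => x (embed d i j)

end STConn
namespace STConn

open Formula

/-- Maximum number of faults Player A can encounter at her decision nodes along
a game path in `P_A(x)` (paths through A-winnable subtrees only): at an
`∨`-node (A's turn) a fault occurs when exactly one child subtree is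
A-winnable, and the path must continue into an A-winnable child; at an
`∧`-node (B's turn) the adversary may go either way.  (Meaningful for
A-winnable inputs.) -/
def maxFaultA : (d : ℕ) → (Fin (2 ^ d) → Bool) → ℕ
  | 0, _ => 0
  | d + 1, x =>
    let vL := (nandTree d).eval (half d 0 x)
    let vR := (nandTree d).eval (half d 1 x)
    if (d + 1) % 2 = 1 then
      -- ∧-node: Player B's turn; both subtrees are A-winnable when x is
      max (maxFaultA d (half d 0 x)) (maxFaultA d (half d 1 x))
    else
      -- ∨-node: Player A's turn
      if vL && vR then max (maxFaultA d (half d 0 x)) (maxFaultA d (half d 1 x))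
      else if vL then 1 + maxFaultA d (half d 0 x)
      else if vR then 1 + maxFaultA d (half d 1 x)
      else 0

/-- Maximum number of faults Player B can encounter at his decision nodes along
a game path in `P_B(x)`: at an `∧`-node (B's turn) a fault occurs when exactly
one child subtree is B-winnable.  (Meaningful for B-winnable inputs.) -/
def maxFaultB : (d : ℕ) → (Fin (2 ^ d) → Bool) → ℕ
  | 0, _ => 0
  | d + 1, x =>
    let vL := (nandTree d).eval (half d 0 x)
    let vR := (nandTree d).eval (half d 1 x)
    if (d + 1) % 2 = 1 then
      -- ∧-node: Player B's turn
      if !vL && !vR then max (maxFaultB d (half d 0 x)) (maxFaultB d (half d 1 x))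
      else if !vL then 1 + maxFaultB d (half d 0 x)
      else if !vR then 1 + maxFaultB d (half d 1 x)
      else 0
    else
      -- ∨-node: Player A's turn; both subtrees are B-winnable when x is
      max (maxFaultB d (half d 0 x)) (maxFaultB d (half d 1 x))

/-- The fault complexity `F_A(x) = 2^{max_{p ∈ P_A(x)} f_A(p)}` for A-winnable
inputs `x`, and `∞` otherwise. -/
noncomputable def faultA (d : ℕ) (x : Fin (2 ^ d) → Bool) : ℝ≥0∞ :=
  if (nandTree d).eval x = true then (2 : ℝ≥0∞) ^ maxFaultA d x else ⊤

/-- The fault complexity `F_B(x) = 2^{max_{p ∈ P_B(x)} f_B(p)}` for B-winnable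
inputs `x`, and `∞` otherwise. -/
noncomputable def faultB (d : ℕ) (x : Fin (2 ^ d) → Bool) : ℝ≥0∞ :=
  if (nandTree d).eval x = false then (2 : ℝ≥0∞) ^ maxFaultB d x else ⊤

end STConn

/-!
Effective resistance is the least energy of a unit `st`-flow, so it suffices to exhibit, by
induction on `d`, a flow of energy at most `2 ^ (d % 2) * 2 ^ f` on `G` (and `2⁻¹ ^ (d % 2) * 2 ^ f`
on the dual graph), where `f` is the maximal fault count. A series composition concatenates the
children's flows and adds their energies: `2 ^ m₀ + 2 ^ m₁ ≤ 2 * 2 ^ max m₀ m₁`. A parallel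
composition routes the flow through the winnable children only: halved between two of them it
costs a quarter of their energies, `(2 * 2 ^ m₀ + 2 * 2 ^ m₁) / 4 ≤ 2 ^ max m₀ m₁`, while through
a single one, at a fault, it costs `2 * 2 ^ m = 2 ^ (m + 1)`.
-/

namespace STConn

section Flows

variable {V V' E : Type*} [Fintype E] [DecidableEq V] [DecidableEq V']

def IsFlowOfValue (ends : E → V × V) (s t : V) (a : ℝ) (θ : E → ℝ) : Prop :=
  ∀ v, netflow ends θ v = a * ((if v = s then 1 else 0) - if v = t then 1 else 0)

variable {ends : E → V × V} {s t : V} {a : ℝ} {θ : E → ℝ}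

theorem isUnitFlow_iff_isFlowOfValue_one :
    IsUnitFlow ends s t θ ↔ IsFlowOfValue ends s t 1 θ := by
  simp only [IsUnitFlow, IsFlowOfValue, one_mul]

theorem isFlowOfValue_zero (ends : E → V × V) (s t : V) : IsFlowOfValue ends s t 0 0 := by
  intro v
  simp [netflow]

theorem IsFlowOfValue.const_mul (h : IsFlowOfValue ends s t a θ) (c : ℝ) :
    IsFlowOfValue ends s t (c * a) (fun e => c * θ e) := by
  intro v
  rw [mul_assoc, ← h v, netflow, netflow, Finset.mul_sum]
  simp only [mul_assoc]

theorem netflow_map [Fintype V] (ends : E → V × V) (g : V → V') (θ : E → ℝ) (v : V') :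
    netflow (fun e => Prod.map g g (ends e)) θ v = ∑ u with g u = v, netflow ends θ u := by
  unfold netflow
  rw [Finset.sum_comm]
  refine Finset.sum_congr rfl fun e _ => ?_
  rw [← Finset.mul_sum, Finset.sum_sub_distrib, Finset.sum_ite_eq, Finset.sum_ite_eq]
  simp

theorem IsFlowOfValue.map [Fintype V] (h : IsFlowOfValue ends s t a θ) (g : V → V') :
    IsFlowOfValue (fun e => Prod.map g g (ends e)) (g s) (g t) a θ := by
  intro v
  rw [netflow_map, Finset.sum_congr rfl fun u _ => h u, ← Finset.mul_sum,
    Finset.sum_sub_distrib, Finset.sum_ite_eq', Finset.sum_ite_eq']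
  simp [eq_comm]

theorem IsFlowOfValue.comp_equiv {E' : Type*} [Fintype E'] [Fintype V] {ends' : E' → V' × V'}
    (h : IsFlowOfValue ends s t a θ) (eL : E ≃ E') (g : V → V')
    (hends : ∀ e, ends' (eL e) = Prod.map g g (ends e)) :
    IsFlowOfValue ends' (g s) (g t) a (θ ∘ eL.symm) := by
  intro v
  have hpull : netflow ends' (θ ∘ eL.symm) v = netflow (fun e => Prod.map g g (ends e)) θ v := by
    unfold netflow
    rw [← eL.sum_comp]
    simp [hends]
  rw [hpull, h.map g v]

theorem netflow_sigma {ι : Type*} [Fintype ι] {L : ι → Type*} [∀ i, Fintype (L i)]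
    [Fintype (Σ i, L i)] (ends : (Σ i, L i) → V × V) (θ : ∀ i, L i → ℝ) (v : V) :
    netflow ends (fun e => θ e.1 e.2) v = ∑ i, netflow (fun l => ends ⟨i, l⟩) (θ i) v := by
  unfold netflow
  convert Fintype.sum_sigma _

end Flows

end STConn

namespace STConn.Formula

variable {N M : ℕ}

@[reducible] def innerFintype : (φ : Formula N) → Fintype φ.Inner
  | .var _ => inferInstanceAs (Fintype Empty)
  | .and k fs =>
      letI := fun i => innerFintype (fs i)
      inferInstanceAs (Fintype ((Σ i : Fin (k + 1), (fs i).Inner) ⊕ Fin k))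
  | .or k fs =>
      letI := fun i => innerFintype (fs i)
      inferInstanceAs (Fintype (Σ i : Fin (k + 1), (fs i).Inner))

instance (φ : Formula N) : Fintype φ.Inner := innerFintype φ

def HasUnitFlow (φ : Formula N) (P : Fin N → Prop) (r : ℝ) : Prop :=
  ∃ θ : φ.Leaves → ℝ, IsFlowOfValue φ.ends φ.src φ.snk 1 θ ∧
    (∀ l, ¬ P (φ.label l) → θ l = 0) ∧ ∑ l, θ l ^ 2 ≤ r

variable {φ : Formula N} {P : Fin N → Prop} {r r' : ℝ}

theorem HasUnitFlow.mono (h : HasUnitFlow φ P r) (hr : r ≤ r') : HasUnitFlow φ P r' :=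
  let ⟨θ, hflow, hsupp, henergy⟩ := h
  ⟨θ, hflow, hsupp, henergy.trans hr⟩

theorem HasUnitFlow.effResOn_le (h : HasUnitFlow φ P r) :
    effResOn φ.ends (fun _ => 1) {l | P (φ.label l)} φ.src φ.snk ≤ ENNReal.ofReal r := by
  obtain ⟨θ, hflow, hsupp, henergy⟩ := h
  refine iInf_le_of_le ⟨θ, isUnitFlow_iff_isFlowOfValue_one.2 hflow, hsupp⟩ ?_
  exact ENNReal.ofReal_le_ofReal (by simpa [energy] using henergy)

theorem hasUnitFlow_var {i : Fin N} (hi : P i) : HasUnitFlow (.var i) P 1 := by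
  refine ⟨fun _ => 1, fun v => ?_, fun _ h => absurd hi h, by simp [Leaves]; rfl⟩
  rcases v with ⟨⟨⟩⟩ | _ | _ <;> simp [netflow, Leaves, ends, src, snk] <;> rfl

-- The `j`-th vertex along the chain of a series composition: `s`, the `k` junctions, then `t`.
def seriesVertex (k : ℕ) (fs : Fin (k + 1) → Formula N) (j : ℕ) : (Formula.and k fs).Vert :=
  if h0 : j = 0 then .inr true
  else if h : j ≤ k then .inl (.inr ⟨j - 1, by omega⟩)
  else .inr false

theorem vmapAnd_src (k : ℕ) (fs : Fin (k + 1) → Formula N) (i : Fin (k + 1)) :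
    vmapAnd k fs i (fs i).src = seriesVertex k fs i := by
  have := i.isLt
  simp only [src, vmapAnd, seriesVertex]
  split_ifs <;> first | rfl | omega

theorem vmapAnd_snk (k : ℕ) (fs : Fin (k + 1) → Formula N) (i : Fin (k + 1)) :
    vmapAnd k fs i (fs i).snk = seriesVertex k fs (i + 1) := by
  have := i.isLt
  simp only [snk, vmapAnd, seriesVertex]
  split_ifs <;> simp_all
  omega

theorem hasUnitFlow_and {k : ℕ} {fs : Fin (k + 1) → Formula N} {r : Fin (k + 1) → ℝ}
    (h : ∀ i, HasUnitFlow (fs i) P (r i)) : HasUnitFlow (.and k fs) P (∑ i, r i) := by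
  choose θ hflow hsupp henergy using h
  refine ⟨fun e => θ e.1 e.2, fun v => ?_, fun e => hsupp e.1 e.2, ?_⟩
  · have hchild (i : Fin (k + 1)) :
        netflow (fun l => (Formula.and k fs).ends ⟨i, l⟩) (θ i) v =
          (if v = seriesVertex k fs i then 1 else 0) -
            if v = seriesVertex k fs (i + 1) then 1 else 0 := by
      have := (hflow i).map (vmapAnd k fs i) v
      rwa [vmapAnd_src, vmapAnd_snk, one_mul] at this
    refine (netflow_sigma (L := fun i => (fs i).Leaves) (Formula.and k fs).ends θ v).trans ?_
    rw [Finset.sum_congr rfl fun i _ => hchild i,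
      Fin.sum_univ_eq_sum_range (fun i => (if v = seriesVertex k fs i then (1 : ℝ) else 0) -
        if v = seriesVertex k fs (i + 1) then 1 else 0), Finset.sum_range_sub']
    simp [seriesVertex, src, snk]
    rfl
  · calc ∑ e : (Formula.and k fs).Leaves, θ e.1 e.2 ^ 2 = ∑ i, ∑ l, θ i l ^ 2 := by
          exact Fintype.sum_sigma (α := fun i => (fs i).Leaves) fun e => θ e.1 e.2 ^ 2
      _ ≤ ∑ i, r i := Finset.sum_le_sum fun i _ => henergy i

theorem hasUnitFlow_or {k : ℕ} {fs : Fin (k + 1) → Formula N} (c r : Fin (k + 1) → ℝ)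
    (hc : ∑ i, c i = 1) (h : ∀ i, c i ≠ 0 → HasUnitFlow (fs i) P (r i)) :
    HasUnitFlow (.or k fs) P (∑ i, c i ^ 2 * r i) := by
  have hscaled (i : Fin (k + 1)) : ∃ θ : (fs i).Leaves → ℝ,
      IsFlowOfValue (fs i).ends (fs i).src (fs i).snk (c i) θ ∧
        (∀ l, ¬ P ((fs i).label l) → θ l = 0) ∧ ∑ l, θ l ^ 2 ≤ c i ^ 2 * r i := by
    by_cases hci : c i = 0
    · exact ⟨0, hci ▸ isFlowOfValue_zero _ _ _, fun _ _ => rfl, by simp [hci]⟩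
    · obtain ⟨θ, hflow, hsupp, henergy⟩ := h i hci
      refine ⟨fun l => c i * θ l, by simpa using hflow.const_mul (c i),
        fun l hl => by simp [hsupp l hl], ?_⟩
      simp only [mul_pow, ← Finset.mul_sum]
      exact mul_le_mul_of_nonneg_left henergy (sq_nonneg _)
  choose θ hflow hsupp henergy using hscaled
  refine ⟨fun e => θ e.1 e.2, fun v => ?_, fun e => hsupp e.1 e.2, ?_⟩
  · have hchild (i : Fin (k + 1)) :
        netflow (fun l => (Formula.or k fs).ends ⟨i, l⟩) (θ i) v =
          c i * ((if v = (Formula.or k fs).src then 1 else 0) -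
            if v = (Formula.or k fs).snk then 1 else 0) :=
      (hflow i).map (vmapOr k fs i) v
    refine (netflow_sigma (L := fun i => (fs i).Leaves) (Formula.or k fs).ends θ v).trans ?_
    rw [Finset.sum_congr rfl fun i _ => hchild i, ← Finset.sum_mul, hc]
  · calc ∑ e : (Formula.or k fs).Leaves, θ e.1 e.2 ^ 2 = ∑ i, ∑ l, θ i l ^ 2 := by
          exact Fintype.sum_sigma (α := fun i => (fs i).Leaves) fun e => θ e.1 e.2 ^ 2
      _ ≤ ∑ i, c i ^ 2 * r i := Finset.sum_le_sum fun i _ => henergy i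

theorem HasUnitFlow.or_of_child {k : ℕ} {fs : Fin (k + 1) → Formula N} (i : Fin (k + 1))
    (h : HasUnitFlow (fs i) P r) : HasUnitFlow (.or k fs) P r := by
  simpa using hasUnitFlow_or (fun j => if j = i then 1 else 0) (fun _ => r) (by simp)
    fun j hj => (show j = i by simpa using hj) ▸ h

theorem exists_relabel_equiv (f : Fin N → Fin M) (φ : Formula N) :
    ∃ (eL : φ.Leaves ≃ (φ.relabel f).Leaves) (g : φ.Inner → (φ.relabel f).Inner),
      (∀ l, (φ.relabel f).label (eL l) = f (φ.label l)) ∧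
        ∀ l, (φ.relabel f).ends (eL l) = Prod.map (Sum.map g id) (Sum.map g id) (φ.ends l) := by
  induction φ with
  | var i => exact ⟨Equiv.refl _, id, fun _ => rfl, fun _ => rfl⟩
  | and k fs ih =>
    choose eL g hlabel hends using ih
    let G : (Formula.and k fs).Inner → ((Formula.and k fs).relabel f).Inner :=
      Sum.map (fun p => ⟨p.1, g p.1 p.2⟩) id
    have hvmap (i : Fin (k + 1)) (u : (fs i).Vert) :
        vmapAnd k (fun j => (fs j).relabel f) i (Sum.map (g i) id u) =
          Sum.map G id (vmapAnd k fs i u) := by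
      rcases u with _ | _ | _
      · rfl
      all_goals simp only [Sum.map, vmapAnd]; split_ifs <;> rfl
    refine ⟨Equiv.sigmaCongrRight eL, G, fun ⟨i, l⟩ => hlabel i l, fun ⟨i, l⟩ => ?_⟩
    change Prod.map _ _ (((fs i).relabel f).ends (eL i l)) = _
    rw [hends i l]
    simp only [Prod.map, hvmap]
    rfl
  | or k fs ih =>
    choose eL g hlabel hends using ih
    let G : (Formula.or k fs).Inner → ((Formula.or k fs).relabel f).Inner :=
      fun p => ⟨p.1, g p.1 p.2⟩
    have hvmap (i : Fin (k + 1)) (u : (fs i).Vert) :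
        vmapOr k (fun j => (fs j).relabel f) i (Sum.map (g i) id u) =
          Sum.map G id (vmapOr k fs i u) := by
      rcases u with _ | _ <;> rfl
    refine ⟨Equiv.sigmaCongrRight eL, G, fun ⟨i, l⟩ => hlabel i l, fun ⟨i, l⟩ => ?_⟩
    change Prod.map _ _ (((fs i).relabel f).ends (eL i l)) = _
    rw [hends i l]
    simp only [Prod.map, hvmap]
    rfl

theorem HasUnitFlow.relabel (f : Fin N → Fin M) {P : Fin M → Prop}
    (h : HasUnitFlow φ (fun i => P (f i)) r) : HasUnitFlow (φ.relabel f) P r := by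
  obtain ⟨eL, g, hlabel, hends⟩ := exists_relabel_equiv f φ
  obtain ⟨θ, hflow, hsupp, henergy⟩ := h
  refine ⟨θ ∘ eL.symm, hflow.comp_equiv eL (Sum.map g id) hends, fun l hl => ?_, ?_⟩
  · exact hsupp _ fun hP => hl (by rwa [← eL.apply_symm_apply l, hlabel])
  · rw [← eL.sum_comp]
    simpa using henergy

theorem eval_relabel (f : Fin N → Fin M) (φ : Formula N) (x : Fin M → Bool) :
    (φ.relabel f).eval x = φ.eval (x ∘ f) := by
  induction φ with
  | var i => rfl
  | and k fs ih => simp only [relabel, eval, ih]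
  | or k fs ih => simp only [relabel, eval, ih]

theorem eval_and_two (fs : Fin 2 → Formula N) (x : Fin N → Bool) :
    (Formula.and 1 fs).eval x = ((fs 0).eval x && (fs 1).eval x) := by
  simp [eval, List.finRange_succ]

theorem eval_or_two (fs : Fin 2 → Formula N) (x : Fin N → Bool) :
    (Formula.or 1 fs).eval x = ((fs 0).eval x || (fs 1).eval x) := by
  simp [eval, List.finRange_succ]

theorem dualF_relabel (f : Fin N → Fin M) (φ : Formula N) :
    dualF (φ.relabel f) = (dualF φ).relabel f := by
  induction φ with
  | var i => rfl
  | and k fs ih => simp only [relabel, dualF, ih]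
  | or k fs ih => simp only [relabel, dualF, ih]

end STConn.Formula

namespace STConn

open Formula

variable {N : ℕ} {P : Fin N → Prop}

theorem two_pow_add_two_pow_le_two_mul_two_pow_max (m n : ℕ) :
    (2 : ℝ) ^ m + 2 ^ n ≤ 2 * 2 ^ max m n := by
  have hm : (2 : ℝ) ^ m ≤ 2 ^ max m n := pow_le_pow_right₀ one_le_two (le_max_left m n)
  have hn : (2 : ℝ) ^ n ≤ 2 ^ max m n := pow_le_pow_right₀ one_le_two (le_max_right m n)
  linarith

theorem hasUnitFlow_and_two_pow {fs : Fin 2 → Formula N} {a : ℝ} (ha : 0 ≤ a) (m : Fin 2 → ℕ)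
    (h : ∀ i, HasUnitFlow (fs i) P (a * 2 ^ m i)) :
    HasUnitFlow (.and 1 fs) P (2 * a * 2 ^ max (m 0) (m 1)) := by
  refine (hasUnitFlow_and h).mono ?_
  rw [Fin.sum_univ_two]
  nlinarith [two_pow_add_two_pow_le_two_mul_two_pow_max (m 0) (m 1)]

-- The exponent is the `∨`-clause of `maxFaultA` (and, with `v` negated, the `∧`-clause of
-- `maxFaultB`).
theorem hasUnitFlow_or_two_pow {fs : Fin 2 → Formula N} {a : ℝ} (ha : 0 ≤ a) (v : Fin 2 → Bool)
    (m : Fin 2 → ℕ) (hv : (v 0 || v 1) = true)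
    (h : ∀ i, v i = true → HasUnitFlow (fs i) P (2 * a * 2 ^ m i)) :
    HasUnitFlow (.or 1 fs) P (a * 2 ^ (if v 0 && v 1 then max (m 0) (m 1)
      else if v 0 then 1 + m 0 else if v 1 then 1 + m 1 else 0)) := by
  cases h0 : v 0 <;> cases h1 : v 1 <;>
    simp only [h0, h1, Bool.and_self, Bool.and_false, Bool.false_and, Bool.false_eq_true,
      Bool.or_self, reduceIte] at hv ⊢
  · exact ((h 1 h1).or_of_child 1).mono (le_of_eq (by ring))
  · exact ((h 0 h0).or_of_child 0).mono (le_of_eq (by ring))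
  · refine (hasUnitFlow_or (fun _ => 1 / 2) _ (by norm_num) fun i _ =>
      h i (by fin_cases i <;> assumption)).mono ?_
    rw [Fin.sum_univ_two]
    nlinarith [two_pow_add_two_pow_le_two_mul_two_pow_max (m 0) (m 1)]

theorem nandTree_succ_of_even {d : ℕ} (hd : d % 2 = 0) :
    nandTree (d + 1) = .and 1 fun i => (nandTree d).relabel (embed d i) := by
  rw [nandTree, if_pos (by omega)]

theorem nandTree_succ_of_odd {d : ℕ} (hd : d % 2 = 1) :
    nandTree (d + 1) = .or 1 fun i => (nandTree d).relabel (embed d i) := by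
  rw [nandTree, if_neg (by omega)]

theorem dualF_nandTree_succ_of_even {d : ℕ} (hd : d % 2 = 0) :
    dualF (nandTree (d + 1)) = .or 1 fun i => (dualF (nandTree d)).relabel (embed d i) := by
  simp only [nandTree_succ_of_even hd, dualF, dualF_relabel]

theorem dualF_nandTree_succ_of_odd {d : ℕ} (hd : d % 2 = 1) :
    dualF (nandTree (d + 1)) = .and 1 fun i => (dualF (nandTree d)).relabel (embed d i) := by
  simp only [nandTree_succ_of_odd hd, dualF, dualF_relabel]

theorem eval_nandTree_relabel_embed (d : ℕ) (i : Fin 2) (x : Fin (2 ^ (d + 1)) → Bool) :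
    ((nandTree d).relabel (embed d i)).eval x = (nandTree d).eval (half d i x) :=
  eval_relabel _ _ _

theorem hasUnitFlow_nandTree (d : ℕ) (x : Fin (2 ^ d) → Bool)
    (hx : (nandTree d).eval x = true) :
    HasUnitFlow (nandTree d) (fun j => x j = true) (2 ^ (d % 2) * 2 ^ maxFaultA d x) := by
  induction d with
  | zero => exact (hasUnitFlow_var hx).mono (by simp [maxFaultA])
  | succ d ih =>
    have hchild (i : Fin 2) (hi : (nandTree d).eval (half d i x) = true) :=
      (ih (half d i x) hi).relabel (P := fun j => x j = true) (embed d i)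
    rcases Nat.mod_two_eq_zero_or_one d with hd | hd
    · rw [nandTree_succ_of_even hd, eval_and_two, eval_nandTree_relabel_embed,
        eval_nandTree_relabel_embed, Bool.and_eq_true] at hx
      have hflow := hasUnitFlow_and_two_pow (P := fun j => x j = true) zero_le_one
        (fun i => maxFaultA d (half d i x)) fun i => by
          simpa [hd] using hchild i (by fin_cases i; exacts [hx.1, hx.2])
      rw [nandTree_succ_of_even hd]
      simpa [maxFaultA, hd, show (d + 1) % 2 = 1 by omega] using hflow
    · rw [nandTree_succ_of_odd hd, eval_or_two, eval_nandTree_relabel_embed,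
        eval_nandTree_relabel_embed] at hx
      have hflow := hasUnitFlow_or_two_pow (P := fun j => x j = true) zero_le_one
        (fun i => (nandTree d).eval (half d i x)) (fun i => maxFaultA d (half d i x)) hx
        fun i hi => by simpa [hd] using hchild i hi
      rw [nandTree_succ_of_odd hd]
      simpa [maxFaultA, hd, show (d + 1) % 2 = 0 by omega] using hflow

theorem hasUnitFlow_dualF_nandTree (d : ℕ) (x : Fin (2 ^ d) → Bool)
    (hx : (nandTree d).eval x = false) :
    HasUnitFlow (dualF (nandTree d)) (fun j => x j = false)
      (2⁻¹ ^ (d % 2) * 2 ^ maxFaultB d x) := by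
  induction d with
  | zero => exact (hasUnitFlow_var hx).mono (by simp [maxFaultB])
  | succ d ih =>
    have hchild (i : Fin 2) (hi : (nandTree d).eval (half d i x) = false) :=
      (ih (half d i x) hi).relabel (P := fun j => x j = false) (embed d i)
    rcases Nat.mod_two_eq_zero_or_one d with hd | hd
    · rw [nandTree_succ_of_even hd, eval_and_two, eval_nandTree_relabel_embed,
        eval_nandTree_relabel_embed, Bool.and_eq_false_iff] at hx
      have hflow := hasUnitFlow_or_two_pow (P := fun j => x j = false) (a := 2⁻¹) (by norm_num)
        (fun i => !(nandTree d).eval (half d i x)) (fun i => maxFaultB d (half d i x))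
        (by simpa using hx) fun i hi => by simpa [hd] using hchild i (by simpa using hi)
      rw [dualF_nandTree_succ_of_even hd]
      simpa [maxFaultB, hd, show (d + 1) % 2 = 1 by omega] using hflow
    · rw [nandTree_succ_of_odd hd, eval_or_two, eval_nandTree_relabel_embed,
        eval_nandTree_relabel_embed, Bool.or_eq_false_iff] at hx
      have hflow := hasUnitFlow_and_two_pow (P := fun j => x j = false) (a := 2⁻¹) (by norm_num)
        (fun i => maxFaultB d (half d i x)) fun i => by
          simpa [hd] using hchild i (by fin_cases i; exacts [hx.1, hx.2])
      rw [dualF_nandTree_succ_of_odd hd]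
      simpa [maxFaultB, hd, show (d + 1) % 2 = 0 by omega] using hflow

theorem effResOn_nandTree_le (d : ℕ) (x : Fin (2 ^ d) → Bool) :
    effResOn (nandTree d).ends (fun _ => (1 : ℝ)) {l | x ((nandTree d).label l) = true}
      (nandTree d).src (nandTree d).snk ≤ 2 ^ (d % 2) * faultA d x := by
  unfold faultA
  split_ifs with hx
  · refine (hasUnitFlow_nandTree d x hx).effResOn_le.trans_eq ?_
    rw [ENNReal.ofReal_mul (by positivity), ENNReal.ofReal_pow zero_le_two,
      ENNReal.ofReal_pow zero_le_two, ENNReal.ofReal_ofNat]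
  · simp [ENNReal.mul_top]

theorem effResOn_dualF_nandTree_le (d : ℕ) (x : Fin (2 ^ d) → Bool) :
    effResOn (dualF (nandTree d)).ends (fun _ => (1 : ℝ))
      {l | x ((dualF (nandTree d)).label l) = false}
      (dualF (nandTree d)).src (dualF (nandTree d)).snk ≤ 2⁻¹ ^ (d % 2) * faultB d x := by
  unfold faultB
  split_ifs with hx
  · refine (hasUnitFlow_dualF_nandTree d x hx).effResOn_le.trans_eq ?_
    rw [ENNReal.ofReal_mul (by positivity), ENNReal.ofReal_pow (by norm_num),
      ENNReal.ofReal_pow zero_le_two, ENNReal.ofReal_inv_of_pos two_pos, ENNReal.ofReal_ofNat]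
  · simp [ENNReal.mul_top]

end STConn

open STConn Formula in
/-- Effective resistance versus fault complexity for NAND-trees, with unit edge
weights.  If `d` is even then `R_{s,t}(G_{NAND_d}(x)) ≤ F_A(x)` and
`R_{s',t'}(G'_{NAND_d}(x)) ≤ F_B(x)`; if `d` is odd then
`R_{s,t}(G_{NAND_d}(x)) ≤ 2·F_A(x)` and `R_{s',t'}(G'_{NAND_d}(x)) ≤ 2·F_B(x)`
(both sides may be `∞`).  The dual graph is realized as the graph of the
De Morgan dual formula. -/
theorem stmt_16 (d : ℕ) (x : Fin (2 ^ d) → Bool) :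
    (d % 2 = 0 →
      effResOn (nandTree d).ends (fun _ => (1 : ℝ))
          {l | x ((nandTree d).label l) = true}
          (nandTree d).src (nandTree d).snk ≤ faultA d x ∧
      effResOn (dualF (nandTree d)).ends (fun _ => (1 : ℝ))
          {l | x ((dualF (nandTree d)).label l) = false}
          (dualF (nandTree d)).src (dualF (nandTree d)).snk ≤ faultB d x) ∧
    (d % 2 = 1 →
      effResOn (nandTree d).ends (fun _ => (1 : ℝ))
          {l | x ((nandTree d).label l) = true}
          (nandTree d).src (nandTree d).snk ≤ 2 * faultA d x ∧
      effResOn (dualF (nandTree d)).ends (fun _ => (1 : ℝ))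
          {l | x ((dualF (nandTree d)).label l) = false}
          (dualF (nandTree d)).src (dualF (nandTree d)).snk ≤ 2 * faultB d x) := by
  have hA := effResOn_nandTree_le d x
  have hB := effResOn_dualF_nandTree_le d x
  refine ⟨fun hd => ?_, fun hd => ?_⟩
  · rw [hd, pow_zero, one_mul] at hA hB
    exact ⟨hA, hB⟩
  · rw [hd, pow_one] at hA hB
    exact ⟨hA, hB.trans (by gcongr; exact (ENNReal.inv_le_one.2 one_le_two).trans one_le_two)⟩
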